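/- Cutoff phenomenon in Example 1: define, for Γ ∈ [0,1], G(Γ) := max over p₁,p₂,p₃ ∈ [0,1] of (1/2)[h₂(q₀/2) − q₀] + (1/2)[h₂((1−q₁)/2) − (1−q₁)], where q₀ = (1−Γ)p₁ + Γp₂ and q₁ = (1−Γ)p₁ + Γp₃. Then for every Γ ∈ [1/5, 1], G(Γ) = G(1) = h₂(1/5) − 2/5; that is, probing a fraction 1/5 of the states already achieves the full-observation capacity. -/

import Mathlib

/-!
Binary entropy is concave with derivative `log₂ ((1 - p) / p)`, which equals `2` at `p = 1/5`;
hence `h₂ x ≤ h₂ (1/5) + 2 (x - 1/5)`, so each bracket `h₂ (q / 2) - q` is at most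
`h₂ (1/5) - 2/5`, with equality at `q = 2/5`. Thus `G(Γ) ≤ h₂ (1/5) - 2/5` for every `Γ`, with
equality once `q₀ = 2/5` and `q₁ = 3/5` are achievable: with `p₁ = 1/2` this asks for
`p₂ = (5Γ - 1) / (10Γ)` and `p₃ = (5Γ + 1) / (10Γ)`, which lie in `[0, 1]` exactly when `Γ ≥ 1/5`.
-/

/-- The binary entropy function (base 2), with `h₂ 0 = h₂ 1 = 0`. -/
noncomputable def binH (p : ℝ) : ℝ :=
  -(p * Real.logb 2 p) - ((1 - p) * Real.logb 2 (1 - p))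

/-- The capacity expression of Theorem 1 for the channel of Example 1
(`α = β = ε = 1/2`): for `Γ ∈ [0,1]`,
`G(Γ) = max_{p₁,p₂,p₃ ∈ [0,1]} (1/2)[h₂(q₀/2) − q₀] + (1/2)[h₂((1−q₁)/2) − (1−q₁)]`
with `q₀ = (1−Γ)p₁ + Γp₂` and `q₁ = (1−Γ)p₁ + Γp₃`. -/
noncomputable def Gcap (Γ : ℝ) : ℝ :=
  sSup {r : ℝ | ∃ p₁ p₂ p₃ : ℝ,
    p₁ ∈ Set.Icc (0 : ℝ) 1 ∧ p₂ ∈ Set.Icc (0 : ℝ) 1 ∧ p₃ ∈ Set.Icc (0 : ℝ) 1 ∧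
    r = (1 / 2) * (binH (((1 - Γ) * p₁ + Γ * p₂) / 2) - ((1 - Γ) * p₁ + Γ * p₂))
      + (1 / 2) * (binH ((1 - ((1 - Γ) * p₁ + Γ * p₃)) / 2)
          - (1 - ((1 - Γ) * p₁ + Γ * p₃)))}

open Real Set

lemma ConcaveOn.le_add_mul_sub_of_hasDerivAt {S : Set ℝ} {f : ℝ → ℝ} {x y f' : ℝ}
    (hf : ConcaveOn ℝ S f) (hx : x ∈ S) (hy : y ∈ S) (hf' : HasDerivAt f f' x) :
    f y ≤ f x + f' * (y - x) := by
  rcases lt_trichotomy x y with hxy | rfl | hyx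
  · have h := hf.slope_le_of_hasDerivAt hx hy hxy hf'
    rw [slope_def_field, div_le_iff₀ (sub_pos.2 hxy)] at h
    linarith
  · simp
  · have h := hf.le_slope_of_hasDerivAt hy hx hyx hf'
    rw [slope_def_field, le_div_iff₀ (sub_pos.2 hyx)] at h
    linarith

lemma binH_eq_binEntropy_div_log_two (p : ℝ) : binH p = binEntropy p / log 2 := by
  simp only [binH, binEntropy, logb, log_inv]
  ring

lemma binH_le_add_logb_mul_sub {p x : ℝ} (hp₀ : 0 < p) (hp₁ : p < 1) (hx : x ∈ Icc (0 : ℝ) 1) :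
    binH x ≤ binH p + logb 2 ((1 - p) / p) * (x - p) := by
  have htangent := strictConcave_binEntropy.concaveOn.le_add_mul_sub_of_hasDerivAt
    ⟨hp₀.le, hp₁.le⟩ hx (hasDerivAt_binEntropy hp₀.ne' hp₁.ne)
  rw [binH_eq_binEntropy_div_log_two, binH_eq_binEntropy_div_log_two, logb,
    log_div (by linarith) hp₀.ne']
  calc binEntropy x / log 2
      ≤ (binEntropy p + (log (1 - p) - log p) * (x - p)) / log 2 :=
        div_le_div_of_nonneg_right htangent (log_pos one_lt_two).le
    _ = binEntropy p / log 2 + (log (1 - p) - log p) / log 2 * (x - p) := by ring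

lemma binH_half_sub_le {q : ℝ} (hq₀ : 0 ≤ q) (hq₁ : q ≤ 2) :
    binH (q / 2) - q ≤ binH (1 / 5) - 2 / 5 := by
  have h := binH_le_add_logb_mul_sub (p := 1 / 5) (x := q / 2) (by norm_num) (by norm_num)
    ⟨by linarith, by linarith⟩
  have hslope : logb 2 ((1 - 1 / 5) / (1 / 5)) = 2 := by
    rw [show (1 - 1 / 5) / (1 / 5) = (2 : ℝ) ^ 2 by norm_num, logb_pow,
      logb_self_eq_one one_lt_two]
    norm_num
  rw [hslope] at h
  linarith

lemma Gcap_eq_of_one_fifth_le {Γ : ℝ} (hΓ₀ : 1 / 5 ≤ Γ) (hΓ₁ : Γ ≤ 1) :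
    Gcap Γ = binH (1 / 5) - 2 / 5 := by
  have hΓpos : 0 < Γ := by linarith
  have hmix : ∀ a ∈ Icc (0 : ℝ) 1, ∀ b ∈ Icc (0 : ℝ) 1, (1 - Γ) * a + Γ * b ∈ Icc (0 : ℝ) 1 :=
    fun a ha b hb => by
      simpa only [smul_eq_mul] using
        convex_Icc (0 : ℝ) 1 ha hb (by linarith) hΓpos.le (by ring)
  refine IsGreatest.csSup_eq ⟨?_, ?_⟩
  · refine ⟨1 / 2, (5 * Γ - 1) / (10 * Γ), (5 * Γ + 1) / (10 * Γ), by norm_num,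
      ⟨by apply div_nonneg <;> linarith, by rw [div_le_one (by linarith)]; linarith⟩,
      ⟨by apply div_nonneg <;> linarith, by rw [div_le_one (by linarith)]; linarith⟩, ?_⟩
    have hq₀ : (1 - Γ) * (1 / 2) + Γ * ((5 * Γ - 1) / (10 * Γ)) = 2 / 5 := by
      field_simp; ring
    have hq₁ : (1 - Γ) * (1 / 2) + Γ * ((5 * Γ + 1) / (10 * Γ)) = 3 / 5 := by
      field_simp; ring
    rw [hq₀, hq₁]
    norm_num
    ring
  · rintro r ⟨p₁, p₂, p₃, hp₁, hp₂, hp₃, rfl⟩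
    obtain ⟨hq₀, hq₀'⟩ := hmix p₁ hp₁ p₂ hp₂
    obtain ⟨hq₁, hq₁'⟩ := hmix p₁ hp₁ p₃ hp₃
    have h₀ := binH_half_sub_le hq₀ (by linarith)
    have h₁ := binH_half_sub_le (q := 1 - ((1 - Γ) * p₁ + Γ * p₃)) (by linarith) (by linarith)
    linarith

/-- **Cutoff phenomenon in Example 1.** For every `Γ ∈ [1/5, 1]`,
`G(Γ) = G(1) = h₂(1/5) − 2/5`: probing a fraction `1/5` of the states already
achieves the full-observation capacity. -/
theorem cutoff_example_one :
    ∀ Γ : ℝ, 1 / 5 ≤ Γ → Γ ≤ 1 →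
      Gcap Γ = Gcap 1 ∧ Gcap 1 = binH (1 / 5) - 2 / 5 := by
  intro Γ hΓ₀ hΓ₁
  have hG₁ : Gcap 1 = binH (1 / 5) - 2 / 5 := Gcap_eq_of_one_fifth_le (by norm_num) le_rfl
  exact ⟨(Gcap_eq_of_one_fifth_le hΓ₀ hΓ₁).trans hG₁.symm, hG₁⟩
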